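/- arXiv:1708.03167 — 5 statements merged into one kernel-verified Lean document; each statement's English description precedes it below -/
import Mathlib

section
/- Let v ∈ ℝ^n be an eigenvector of the transition matrix M with eigenvalue λ (i.e., Mv = λv) satisfying the orthogonality condition 𝟙^T Π v = 0. Then for every t ∈ ℝ, the autocovariance matrix satisfies B(t) v = exp(−t(1−λ)) Π v; that is, v solves the generalized eigenvalue problem B(t)v = μ Π v with generalized eigenvalue μ = exp(−t(1−λ)). -/
/-!
The rank-one part `πᵀπ` of `B(t)` annihilates `v` because `π v = 0`, and an eigenvector of `M`
with eigenvalue `λ` is an eigenvector of `exp(-t(I - M))` with eigenvalue `exp(-t(1 - λ))`,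
as one sees termwise on the exponential series.
-/

open Matrix

theorem Matrix.pow_mulVec_of_mulVec_eq_smul {ι R : Type*} [Fintype ι] [DecidableEq ι]
    [CommSemiring R] {N : Matrix ι ι R} {v : ι → R} {μ : R} (h : N *ᵥ v = μ • v) (k : ℕ) :
    (N ^ k) *ᵥ v = μ ^ k • v := by
  induction k with
  | zero => simp
  | succ k ih => rw [pow_succ', ← mulVec_mulVec, ih, mulVec_smul, h, smul_smul, pow_succ]

open scoped Norms.Operator in
theorem Matrix.exp_mulVec_of_mulVec_eq_smul {ι 𝕂 : Type*} [Fintype ι] [DecidableEq ι] [RCLike 𝕂]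
    {N : Matrix ι ι 𝕂} {v : ι → 𝕂} {μ : 𝕂} (h : N *ᵥ v = μ • v) :
    NormedSpace.exp N *ᵥ v = NormedSpace.exp μ • v := by
  have hN := (NormedSpace.exp_series_hasSum_exp' (𝕂 := 𝕂) N).map
    (mulVec.addMonoidHomLeft v) (continuous_id.matrix_mulVec continuous_const)
  have hμ := (NormedSpace.exp_series_hasSum_exp' (𝕂 := 𝕂) μ).smul_const v
  refine hN.unique ?_
  convert hμ using 2 with k
  change ((k.factorial : 𝕂)⁻¹ • N ^ k) *ᵥ v = _
  rw [smul_mulVec, pow_mulVec_of_mulVec_eq_smul h, smul_smul, smul_eq_mul]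

theorem stmt_0_general (n : ℕ) (d : Fin n → ℝ) (m : ℝ) (M : Matrix (Fin n) (Fin n) ℝ)
    (Pi : Matrix (Fin n) (Fin n) ℝ)
    (P : ℝ → Matrix (Fin n) (Fin n) ℝ)
    (hP : ∀ t, P t = NormedSpace.exp ((-t) • ((1 : Matrix (Fin n) (Fin n) ℝ) - M)))
    (B : ℝ → Matrix (Fin n) (Fin n) ℝ)
    (hB : ∀ t, B t = Pi * P t -
      Matrix.vecMulVec (fun i => d i / (2 * m)) (fun j => d j / (2 * m)))
    (v : Fin n → ℝ) (lam : ℝ) (hv : M.mulVec v = lam • v)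
    (horth : ∑ i, (d i / (2 * m)) * v i = 0) (t : ℝ) :
    (B t).mulVec v = Real.exp (-t * (1 - lam)) • Pi.mulVec v := by
  have hgenerator : ((-t) • (1 - M)) *ᵥ v = (-t * (1 - lam)) • v := by
    rw [smul_mulVec, sub_mulVec, one_mulVec, hv]
    module
  have hrankOne : vecMulVec (fun i => d i / (2 * m)) (fun j => d j / (2 * m)) *ᵥ v = 0 := by
    rw [vecMulVec_mulVec, show (fun j => d j / (2 * m)) ⬝ᵥ v = 0 from horth]
    simp
  rw [hB, sub_mulVec, hrankOne, sub_zero, ← mulVec_mulVec, hP, exp_mulVec_of_mulVec_eq_smul hgenerator,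
    mulVec_smul, Real.exp_eq_exp_ℝ]

/-- If `v` is an eigenvector of the transition matrix `M = D⁻¹A` with
eigenvalue `λ` and satisfies `𝟙ᵀ Π v = 0`, then for every `t`,
`B(t) v = exp(−t(1−λ)) Π v`. -/
theorem stmt_0 (n : ℕ) (A : Matrix (Fin n) (Fin n) ℝ)
    (hAsymm : A.IsSymm) (hAnonneg : ∀ i j, 0 ≤ A i j)
    (d : Fin n → ℝ) (hd : ∀ i, d i = ∑ j, A i j) (hdpos : ∀ i, 0 < d i)
    (m : ℝ) (hm : m = (∑ i, ∑ j, A i j) / 2)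
    (M : Matrix (Fin n) (Fin n) ℝ) (hM : M = (Matrix.diagonal d)⁻¹ * A)
    (Pi : Matrix (Fin n) (Fin n) ℝ) (hPi : Pi = (2 * m)⁻¹ • Matrix.diagonal d)
    (P : ℝ → Matrix (Fin n) (Fin n) ℝ)
    (hP : ∀ t, P t = NormedSpace.exp ((-t) • ((1 : Matrix (Fin n) (Fin n) ℝ) - M)))
    (B : ℝ → Matrix (Fin n) (Fin n) ℝ)
    (hB : ∀ t, B t = Pi * P t -
      Matrix.vecMulVec (fun i => d i / (2 * m)) (fun j => d j / (2 * m)))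
    (v : Fin n → ℝ) (lam : ℝ) (hv : M.mulVec v = lam • v)
    (horth : ∑ i, (d i / (2 * m)) * v i = 0) (t : ℝ) :
    (B t).mulVec v = Real.exp (-t * (1 - lam)) • Pi.mulVec v :=
  stmt_0_general n d m M Pi P hP B hB v lam hv horth t
end

section
/- Suppose v_1, …, v_n ∈ ℝ^n are eigenvectors of M with M v_k = λ_k v_k, v_1 = 𝟙 (with λ_1 = 1), and v_k^T Π v_l = δ_{kl} for all k, l. For t ∈ ℝ define the node vectors x_i(t) ∈ ℝ^{n−1} whose k-th component (1 ≤ k ≤ n−1) is √(exp(−t(1−λ_{k+1}))) · π_i · v_{k+1,i}, where π_i = d_i/(2m). Then for every partition g = {g_1, …, g_c} of {1, …, n}, the Markov Stability r(t,g) := Σ_{s=1}^{c} Σ_{i ∈ g_s} Σ_{j ∈ g_s} B(t)_{ij} satisfies r(t,g) = Σ_{s=1}^{c} ‖Σ_{i ∈ g_s} x_i(t)‖², i.e., maximizing Markov Stability over partitions is a max-sum-length vector partitioning problem for the vectors x_i(t). -/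
/-!
Π-orthonormality of the eigenvectors says that the matrix `V` with rows `v k` has inverse `Π Vᵀ`,
so `P(t) = ∑ₖ e^{-t(1-λₖ)} vₖ (Π vₖ)ᵀ`. Hence `Π P(t) = ∑ₖ e^{-t(1-λₖ)} (Π vₖ)(Π vₖ)ᵀ`, whose
stationary mode `k = 1` is exactly `π πᵀ`. What remains, `B(t)`, is the Gram matrix of the node
vectors `x_i(t)`, and summing a Gram matrix over a block gives the squared norm of the block's sum.
-/

open Matrix

namespace Matrix

variable {ι : Type*} [Fintype ι] [DecidableEq ι]

theorem pow_mulVec_of_mulVec_eq_smul_s8 {R : Type*} [CommSemiring R] {C : Matrix ι ι R}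
    {w : ι → R} {μ : R} (h : C *ᵥ w = μ • w) (k : ℕ) : (C ^ k) *ᵥ w = μ ^ k • w := by
  induction k with
  | zero => simp
  | succ k ih => rw [pow_succ, ← mulVec_mulVec, h, mulVec_smul, ih, smul_smul, pow_succ']

section exp

attribute [local instance] Matrix.linftyOpNormedRing Matrix.linftyOpNormedAlgebra

theorem exp_mulVec_of_mulVec_eq_smul_s8 {C : Matrix ι ι ℝ} {w : ι → ℝ} {μ : ℝ}
    (h : C *ᵥ w = μ • w) : NormedSpace.exp C *ᵥ w = Real.exp μ • w := by
  have hC := (NormedSpace.exp_series_hasSum_exp' (𝕂 := ℝ) C).map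
    (mulVec.addMonoidHomLeft w) (continuous_id.matrix_mulVec continuous_const)
  have hμ := (NormedSpace.exp_series_hasSum_exp' (𝕂 := ℝ) μ).smul_const w
  rw [← Real.exp_eq_exp_ℝ] at hμ
  refine hC.unique (hμ.congr_fun fun k => ?_)
  simp [mulVec.addMonoidHomLeft, smul_mulVec, pow_mulVec_of_mulVec_eq_smul_s8 h, smul_smul]

end exp

theorem eq_sum_smul_vecMulVec_of_orthonormal {R : Type*} [CommRing R] {Q S : Matrix ι ι R}
    {v : ι → ι → R} {μ : ι → R} (hv : ∀ k, Q *ᵥ v k = μ k • v k)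
    (horth : ∀ k l, v k ⬝ᵥ S *ᵥ v l = if k = l then 1 else 0) :
    Q = ∑ k, μ k • vecMulVec (v k) (v k ᵥ* S) := by
  have hV : of v * S * (of v)ᵀ = 1 := by
    ext k l
    rw [one_apply, ← horth k l, dotProduct_mulVec]
    rfl
  have hQV : Q * (of v)ᵀ = (of v)ᵀ * diagonal μ := by
    ext i k
    rw [mul_diagonal]
    exact (congrFun (hv k) i).trans (mul_comm _ _)
  calc Q = Q * ((of v)ᵀ * (of v * S)) := by rw [mul_eq_one_comm.mp hV, mul_one]
    _ = (of v)ᵀ * diagonal μ * (of v * S) := by rw [← mul_assoc, hQV]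
    _ = ∑ k, μ k • vecMulVec (v k) (v k ᵥ* S) := by
      ext i j
      rw [mul_apply]
      simp only [mul_diagonal, sum_apply, smul_apply, vecMulVec_apply]
      simp [vecMul, dotProduct, mul_apply, mul_assoc, mul_left_comm]

theorem diagonal_mul_vecMulVec_vecMul_diagonal {R : Type*} [CommSemiring R] (p a : ι → R) :
    diagonal p * vecMulVec a (a ᵥ* diagonal p) = vecMulVec (p * a) (p * a) := by
  ext i j
  simp [diagonal_mul, vecMulVec_apply, vecMul_diagonal, mul_comm, mul_left_comm]

theorem diagonal_mul_sum_eq_vecMulVec_add {R : Type*} [CommSemiring R] {n : ℕ}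
    (p e : Fin (n+1) → R) (v : Fin (n+1) → Fin (n+1) → R) (he : e 0 = 1) (hv : v 0 = 1) :
    diagonal p * ∑ k, e k • vecMulVec (v k) (v k ᵥ* diagonal p) =
      vecMulVec p p + ∑ k : Fin n, e k.succ • vecMulVec (p * v k.succ) (p * v k.succ) := by
  rw [Fin.sum_univ_succ, Matrix.mul_add, Matrix.mul_sum]
  simp only [Matrix.mul_smul, diagonal_mul_vecMulVec_vecMul_diagonal, he, hv, mul_one, one_smul]

end Matrix

theorem norm_sum_sq_eq_sum_sum_inner {E ι : Type*} [NormedAddCommGroup E] [InnerProductSpace ℝ E]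
    (s : Finset ι) (x : ι → E) : ‖∑ i ∈ s, x i‖ ^ 2 = ∑ i ∈ s, ∑ j ∈ s, inner ℝ (x i) (x j) := by
  simp_rw [← real_inner_self_eq_norm_sq, sum_inner, inner_sum]

theorem stmt_8_general (n : ℕ) (d : Fin (n+1) → ℝ) (m : ℝ)
    (M : Matrix (Fin (n+1)) (Fin (n+1)) ℝ)
    (Pi : Matrix (Fin (n+1)) (Fin (n+1)) ℝ)
    (hPi : Pi = (2 * m)⁻¹ • Matrix.diagonal d)
    (P : ℝ → Matrix (Fin (n+1)) (Fin (n+1)) ℝ)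
    (hP : ∀ t, P t = NormedSpace.exp
      ((-t) • ((1 : Matrix (Fin (n+1)) (Fin (n+1)) ℝ) - M)))
    (B : ℝ → Matrix (Fin (n+1)) (Fin (n+1)) ℝ)
    (hB : ∀ t, B t = Pi * P t -
      Matrix.vecMulVec (fun i => d i / (2 * m)) (fun j => d j / (2 * m)))
    (v : Fin (n+1) → Fin (n+1) → ℝ) (lam : Fin (n+1) → ℝ)
    (hv : ∀ k, M.mulVec (v k) = lam k • v k)
    (hv1 : v 0 = fun _ => (1 : ℝ)) (hlam1 : lam 0 = 1)
    (horth : ∀ k l, (v k) ⬝ᵥ Pi.mulVec (v l) = if k = l then 1 else 0)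
    (t : ℝ) (x : Fin (n+1) → EuclideanSpace ℝ (Fin n))
    (hx : ∀ i k, x i k =
      Real.sqrt (Real.exp (-t * (1 - lam k.succ))) * (d i / (2 * m)) * v k.succ i)
    (c : ℕ) (g : Fin c → Finset (Fin (n+1))) :
    ∑ s : Fin c, ∑ i ∈ g s, ∑ j ∈ g s, B t i j =
      ∑ s : Fin c, ‖∑ i ∈ g s, x i‖ ^ 2 := by
  set p : Fin (n+1) → ℝ := fun i => d i / (2 * m)
  have hPi_diag : Pi = diagonal p := by
    ext i j
    simp [hPi, p, diagonal_apply, div_eq_inv_mul]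
  have hPt : P t = ∑ k, Real.exp (-t * (1 - lam k)) • vecMulVec (v k) (v k ᵥ* Pi) := by
    refine eq_sum_smul_vecMulVec_of_orthonormal (fun k => ?_) horth
    rw [hP]
    refine exp_mulVec_of_mulVec_eq_smul_s8 ?_
    rw [smul_mulVec, sub_mulVec, one_mulVec, hv k]
    module
  have hBt : B t = ∑ k : Fin n, Real.exp (-t * (1 - lam k.succ)) •
      vecMulVec (p * v k.succ) (p * v k.succ) := by
    rw [hB, hPt, hPi_diag, diagonal_mul_sum_eq_vecMulVec_add p _ v (by simp [hlam1]) hv1,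
      add_sub_cancel_left]
  have hBx : ∀ i j, B t i j = inner ℝ (x i) (x j) := by
    intro i j
    rw [hBt, Matrix.sum_apply, EuclideanSpace.inner_eq_star_dotProduct]
    refine Finset.sum_congr rfl fun k _ => ?_
    have hsqrt := Real.mul_self_sqrt (Real.exp_nonneg (-t * (1 - lam k.succ)))
    simp only [Matrix.smul_apply, vecMulVec_apply, _root_.Pi.mul_apply, hx, star_trivial,
      smul_eq_mul, p]
    linear_combination -(d i / (2 * m) * v k.succ i * (d j / (2 * m) * v k.succ j)) * hsqrt
  simp only [norm_sum_sq_eq_sum_sum_inner, hBx]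

/-- With `Π`-orthonormal eigenvectors `v_1=𝟙, v_2, …, v_n` of `M`
and node vectors `x_i(t) ∈ ℝ^{n−1}` with components
`√(exp(−t(1−λ_{k+1}))) π_i v_{k+1,i}`, the Markov Stability of any partition
equals the max-sum-length vector-partition objective:
`∑_s ∑_{i,j∈g_s} B(t)_{ij} = ∑_s ‖∑_{i∈g_s} x_i(t)‖²`.
(The graph has `n+1` vertices, so the node vectors live in `ℝ^n`.) -/
theorem stmt_8 (n : ℕ) (A : Matrix (Fin (n+1)) (Fin (n+1)) ℝ)
    (hAsymm : A.IsSymm) (hAnonneg : ∀ i j, 0 ≤ A i j)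
    (d : Fin (n+1) → ℝ) (hd : ∀ i, d i = ∑ j, A i j) (hdpos : ∀ i, 0 < d i)
    (m : ℝ) (hm : m = (∑ i, ∑ j, A i j) / 2)
    (M : Matrix (Fin (n+1)) (Fin (n+1)) ℝ) (hM : M = (Matrix.diagonal d)⁻¹ * A)
    (Pi : Matrix (Fin (n+1)) (Fin (n+1)) ℝ)
    (hPi : Pi = (2 * m)⁻¹ • Matrix.diagonal d)
    (P : ℝ → Matrix (Fin (n+1)) (Fin (n+1)) ℝ)
    (hP : ∀ t, P t = NormedSpace.exp
      ((-t) • ((1 : Matrix (Fin (n+1)) (Fin (n+1)) ℝ) - M)))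
    (B : ℝ → Matrix (Fin (n+1)) (Fin (n+1)) ℝ)
    (hB : ∀ t, B t = Pi * P t -
      Matrix.vecMulVec (fun i => d i / (2 * m)) (fun j => d j / (2 * m)))
    (v : Fin (n+1) → Fin (n+1) → ℝ) (lam : Fin (n+1) → ℝ)
    (hv : ∀ k, M.mulVec (v k) = lam k • v k)
    (hv1 : v 0 = fun _ => (1 : ℝ)) (hlam1 : lam 0 = 1)
    (horth : ∀ k l, (v k) ⬝ᵥ Pi.mulVec (v l) = if k = l then 1 else 0)
    (t : ℝ) (x : Fin (n+1) → EuclideanSpace ℝ (Fin n))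
    (hx : ∀ i k, x i k =
      Real.sqrt (Real.exp (-t * (1 - lam k.succ))) * (d i / (2 * m)) * v k.succ i)
    (c : ℕ) (g : Fin c → Finset (Fin (n+1)))
    (hdisj : ∀ s s' : Fin c, s ≠ s' → Disjoint (g s) (g s'))
    (hcover : Finset.univ.biUnion g = (Finset.univ : Finset (Fin (n+1)))) :
    ∑ s : Fin c, ∑ i ∈ g s, ∑ j ∈ g s, B t i j =
      ∑ s : Fin c, ‖∑ i ∈ g s, x i‖ ^ 2 :=
  stmt_8_general n d m M Pi hPi P hP B hB v lam hv hv1 hlam1 horth t x hx c g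
end

section
/- Suppose v_1, …, v_n ∈ ℝ^n are eigenvectors of M with M v_k = λ_k v_k, v_1 = 𝟙 (with λ_1 = 1), v_k^T Π v_l = δ_{kl}, and assume λ_2 > λ_k for all k ≥ 3. Then for all vertices i, j, exp(t(1−λ_2)) · B(t)_{ij} → π_i π_j v_{2,i} v_{2,j} as t → +∞. In particular, if v_{2,i} v_{2,j} ≠ 0, then there exists T such that for all t > T the sign of B(t)_{ij} equals the sign of v_{2,i} v_{2,j}; i.e., at large Markov times the optimal grouping is the bipartition given by the signs of the entries of the normalised Fiedler vector v_2. -/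
/-!
Diagonalising `M` in the `Π`-orthonormal eigenbasis `v` gives the spectral expansion
`B(t)_{ij} = ∑_{k ≥ 2} e^{-t(1-λ_k)} π_i π_j v_{k,i} v_{k,j}`: the term of `v_1 = 𝟙`, `λ_1 = 1` is
exactly `π^T π`. After multiplying by `e^{t(1-λ_2)}`, the spectral gap makes every term with
`k ≥ 3` decay exponentially, leaving the Fiedler term. Since the prefactor is positive, the sign of
`B(t)_{ij}` is eventually that of the limit.
-/

open Matrix Filter

namespace Matrix

variable {ι : Type*} [Fintype ι] [DecidableEq ι]

theorem mul_transpose_of_mulVec_eq_smul {M : Matrix ι ι ℝ} {v : ι → ι → ℝ} {lam : ι → ℝ}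
    (hv : ∀ k, M *ᵥ v k = lam k • v k) : M * (of v)ᵀ = (of v)ᵀ * diagonal lam := by
  ext i k
  rw [mul_diagonal]
  exact (congrFun (hv k) i).trans (mul_comm _ _)

theorem of_mul_mul_transpose_eq_one {Pi : Matrix ι ι ℝ} {v : ι → ι → ℝ}
    (horth : ∀ k l, v k ⬝ᵥ Pi *ᵥ v l = if k = l then 1 else 0) : of v * Pi * (of v)ᵀ = 1 := by
  ext k l
  rw [one_apply, ← horth, Matrix.mul_assoc, mul_apply']
  rfl

theorem exp_eq_mul_diagonal_mul {N V W : Matrix ι ι ℝ} {μ : ι → ℝ} (hWV : W * V = 1)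
    (hNV : N * V = V * diagonal μ) :
    NormedSpace.exp N = V * diagonal (fun k => Real.exp (μ k)) * W := by
  have hVW : V * W = 1 := mul_eq_one_comm.mp hWV
  have hN : N = V * diagonal μ * V⁻¹ := by
    rw [inv_eq_right_inv hVW, ← hNV, Matrix.mul_assoc, hVW, Matrix.mul_one]
  rw [hN, exp_conj _ _ (.of_mul_eq_one W hVW), exp_diagonal, inv_eq_right_inv hVW,
    Pi.exp_def, Real.exp_eq_exp_ℝ]

theorem exp_smul_one_sub_eq {M W : Matrix ι ι ℝ} {v : ι → ι → ℝ} {lam : ι → ℝ}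
    (hv : ∀ k, M *ᵥ v k = lam k • v k) (hWV : W * (of v)ᵀ = 1) (s : ℝ) :
    NormedSpace.exp (s • (1 - M))
      = (of v)ᵀ * diagonal (fun k => Real.exp (s * (1 - lam k))) * W := by
  refine exp_eq_mul_diagonal_mul hWV ?_
  have : diagonal (fun k => s * (1 - lam k)) = s • (1 - diagonal lam) := by
    rw [← diagonal_one, diagonal_sub, ← diagonal_smul]; rfl
  rw [this, Matrix.smul_mul, Matrix.mul_smul, Matrix.sub_mul, Matrix.mul_sub,
    mul_transpose_of_mulVec_eq_smul hv, Matrix.one_mul, Matrix.mul_one]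

theorem diagonal_mul_transpose_mul_diagonal_mul_apply (π e : ι → ℝ) (v : ι → ι → ℝ) (i j : ι) :
    (diagonal π * ((of v)ᵀ * diagonal e * (of v * diagonal π))) i j
      = ∑ k, e k * (π i * π j * v k i * v k j) := by
  rw [diagonal_mul, mul_apply, Finset.mul_sum]
  refine Finset.sum_congr rfl fun k _ => ?_
  rw [mul_diagonal, mul_diagonal, transpose_apply, of_apply, of_apply]
  ring

theorem diagonal_mul_exp_sub_vecMulVec_apply {M : Matrix ι ι ℝ} {v : ι → ι → ℝ} {lam π : ι → ℝ}
    {k₀ : ι} (hv : ∀ k, M *ᵥ v k = lam k • v k) (horth : of v * diagonal π * (of v)ᵀ = 1)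
    (hv₀ : v k₀ = fun _ => 1) (hlam₀ : lam k₀ = 1) (t : ℝ) (i j : ι) :
    (diagonal π * NormedSpace.exp ((-t) • (1 - M)) - vecMulVec π π) i j
      = ∑ k ∈ Finset.univ.erase k₀, Real.exp (-t * (1 - lam k)) * (π i * π j * v k i * v k j) := by
  rw [exp_smul_one_sub_eq hv horth, sub_apply, diagonal_mul_transpose_mul_diagonal_mul_apply,
    ← Finset.add_sum_erase _ _ (Finset.mem_univ k₀), hv₀, hlam₀, vecMulVec_apply]
  simp

end Matrix

theorem Real.sign_eq_sign_of_mul_pos {a b : ℝ} (h : 0 < a * b) : Real.sign a = Real.sign b := by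
  rcases mul_pos_iff.mp h with ⟨ha, hb⟩ | ⟨ha, hb⟩
  · rw [Real.sign_of_pos ha, Real.sign_of_pos hb]
  · rw [Real.sign_of_neg ha, Real.sign_of_neg hb]

theorem eventually_sign_eq_of_tendsto_mul {α : Type*} {l : Filter α} {f g : α → ℝ} {L : ℝ}
    (hg : ∀ x, 0 < g x) (hL : L ≠ 0) (h : Tendsto (fun x => g x * f x) l (nhds L)) :
    ∀ᶠ x in l, Real.sign (f x) = Real.sign L := by
  filter_upwards [(h.const_mul L).eventually (eventually_gt_nhds (mul_self_pos.mpr hL))] with x hx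
  refine Real.sign_eq_sign_of_mul_pos (pos_of_mul_pos_right (a := g x) ?_ (hg x).le)
  linarith

theorem tendsto_exp_mul_sum_exp_neg_mul {ι : Type*} [DecidableEq ι] {s : Finset ι} {k₀ : ι}
    (hk₀ : k₀ ∈ s) {r : ι → ℝ} (hgap : ∀ k ∈ s, k ≠ k₀ → r k₀ < r k) (c : ι → ℝ) :
    Tendsto (fun t => Real.exp (t * r k₀) * ∑ k ∈ s, Real.exp (-t * r k) * c k) atTop
      (nhds (c k₀)) := by
  have hterm : ∀ k ∈ s, Tendsto (fun t => Real.exp (t * (r k₀ - r k)) * c k) atTop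
      (nhds (if k = k₀ then c k₀ else 0)) := by
    intro k hk
    by_cases hkk : k = k₀
    · subst hkk; simp
    · rw [if_neg hkk]
      have hdecay : Tendsto (fun t => t * (r k₀ - r k)) atTop atBot :=
        tendsto_id.atTop_mul_const_of_neg (sub_neg.mpr (hgap k hk hkk))
      simpa using (Real.tendsto_exp_atBot.comp hdecay).mul_const (c k)
  convert tendsto_finsetSum s hterm using 1
  · ext t
    rw [Finset.mul_sum]
    refine Finset.sum_congr rfl fun k _ => ?_
    rw [← mul_assoc, ← Real.exp_add]
    ring_nf
  · simp [hk₀]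

theorem stmt_10_general (n : ℕ) (A : Matrix (Fin (n+2)) (Fin (n+2)) ℝ)
    (d : Fin (n+2) → ℝ) (hd : ∀ i, d i = ∑ j, A i j) (hdpos : ∀ i, 0 < d i)
    (m : ℝ) (hm : m = (∑ i, ∑ j, A i j) / 2)
    (M : Matrix (Fin (n+2)) (Fin (n+2)) ℝ)
    (Pi : Matrix (Fin (n+2)) (Fin (n+2)) ℝ)
    (hPi : Pi = (2 * m)⁻¹ • Matrix.diagonal d)
    (P : ℝ → Matrix (Fin (n+2)) (Fin (n+2)) ℝ)
    (hP : ∀ t, P t = NormedSpace.exp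
      ((-t) • ((1 : Matrix (Fin (n+2)) (Fin (n+2)) ℝ) - M)))
    (B : ℝ → Matrix (Fin (n+2)) (Fin (n+2)) ℝ)
    (hB : ∀ t, B t = Pi * P t -
      Matrix.vecMulVec (fun i => d i / (2 * m)) (fun j => d j / (2 * m)))
    (v : Fin (n+2) → Fin (n+2) → ℝ) (lam : Fin (n+2) → ℝ)
    (hv : ∀ k, M.mulVec (v k) = lam k • v k)
    (hv1 : v 0 = fun _ => (1 : ℝ)) (hlam1 : lam 0 = 1)
    (horth : ∀ k l, (v k) ⬝ᵥ Pi.mulVec (v l) = if k = l then 1 else 0)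
    (hgap : ∀ k : Fin (n+2), 2 ≤ (k : ℕ) → lam k < lam 1) :
    ∀ i j : Fin (n+2),
      Tendsto (fun t : ℝ => Real.exp (t * (1 - lam 1)) * B t i j) atTop
        (nhds ((d i / (2 * m)) * (d j / (2 * m)) * v 1 i * v 1 j)) ∧
      (v 1 i * v 1 j ≠ 0 → ∃ T : ℝ, ∀ t > T,
        Real.sign (B t i j) = Real.sign (v 1 i * v 1 j)) := by
  intro i j
  have hm_pos : 0 < m := by
    have : 0 < ∑ i, d i := Finset.sum_pos (fun i _ => hdpos i) Finset.univ_nonempty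
    simp only [hm, ← hd]
    positivity
  set π : Fin (n+2) → ℝ := fun i => d i / (2 * m)
  have hPi_eq : Pi = diagonal π := by
    rw [hPi, ← diagonal_smul]
    congr 1
    ext k
    exact inv_mul_eq_div _ _
  have hB_eq (t : ℝ) : B t i j
      = ∑ k ∈ Finset.univ.erase 0, Real.exp (-t * (1 - lam k)) * (π i * π j * v k i * v k j) := by
    rw [hB, hP, hPi_eq]
    exact diagonal_mul_exp_sub_vecMulVec_apply hv (hPi_eq ▸ of_mul_mul_transpose_eq_one horth)
      hv1 hlam1 t i j
  have hone_mem : (1 : Fin (n+2)) ∈ Finset.univ.erase 0 := by simp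
  have hspectral_gap :
      ∀ k ∈ Finset.univ.erase (0 : Fin (n+2)), k ≠ 1 → 1 - lam 1 < 1 - lam k := by
    intro k hk hk1
    have hk0 : k ≠ 0 := Finset.ne_of_mem_erase hk
    have : 2 ≤ (k : ℕ) := by
      rw [Ne, Fin.ext_iff, Fin.val_zero] at hk0
      rw [Ne, Fin.ext_iff, Fin.val_one] at hk1
      omega
    linarith [hgap k this]
  have hlim := tendsto_exp_mul_sum_exp_neg_mul (r := fun k => 1 - lam k) hone_mem hspectral_gap
    (fun k => π i * π j * v k i * v k j)
  simp only [← hB_eq] at hlim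
  refine ⟨hlim, fun hne => ?_⟩
  have hπ : 0 < π i * π j := mul_pos (div_pos (hdpos i) (by positivity))
    (div_pos (hdpos j) (by positivity))
  have hL : π i * π j * v 1 i * v 1 j ≠ 0 := mul_assoc (π i * π j) _ _ ▸ mul_ne_zero hπ.ne' hne
  obtain ⟨T, hT⟩ := eventually_atTop.mp
    (eventually_sign_eq_of_tendsto_mul (fun t => Real.exp_pos _) hL hlim)
  refine ⟨T, fun t ht => (hT t ht.le).trans (Real.sign_eq_sign_of_mul_pos ?_)⟩
  calc 0 < π i * π j * (v 1 i * v 1 j) ^ 2 := by positivity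
    _ = _ := by ring

/-- If `λ_2 > λ_k` for all `k ≥ 3`, then
`exp(t(1−λ_2)) B(t)_{ij} → π_i π_j v_{2,i} v_{2,j}` as `t → +∞`; in particular
if `v_{2,i} v_{2,j} ≠ 0` then for all large `t` the sign of `B(t)_{ij}` equals
the sign of `v_{2,i} v_{2,j}` (the Fiedler bipartition).
(The graph has `n+2` vertices, indexed by `Fin (n+2)`; `v 0 = 𝟙`, `v 1` is the
normalised Fiedler vector.) -/
theorem stmt_10 (n : ℕ) (A : Matrix (Fin (n+2)) (Fin (n+2)) ℝ)
    (hAsymm : A.IsSymm) (hAnonneg : ∀ i j, 0 ≤ A i j)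
    (d : Fin (n+2) → ℝ) (hd : ∀ i, d i = ∑ j, A i j) (hdpos : ∀ i, 0 < d i)
    (m : ℝ) (hm : m = (∑ i, ∑ j, A i j) / 2)
    (M : Matrix (Fin (n+2)) (Fin (n+2)) ℝ) (hM : M = (Matrix.diagonal d)⁻¹ * A)
    (Pi : Matrix (Fin (n+2)) (Fin (n+2)) ℝ)
    (hPi : Pi = (2 * m)⁻¹ • Matrix.diagonal d)
    (P : ℝ → Matrix (Fin (n+2)) (Fin (n+2)) ℝ)
    (hP : ∀ t, P t = NormedSpace.exp
      ((-t) • ((1 : Matrix (Fin (n+2)) (Fin (n+2)) ℝ) - M)))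
    (B : ℝ → Matrix (Fin (n+2)) (Fin (n+2)) ℝ)
    (hB : ∀ t, B t = Pi * P t -
      Matrix.vecMulVec (fun i => d i / (2 * m)) (fun j => d j / (2 * m)))
    (v : Fin (n+2) → Fin (n+2) → ℝ) (lam : Fin (n+2) → ℝ)
    (hv : ∀ k, M.mulVec (v k) = lam k • v k)
    (hv1 : v 0 = fun _ => (1 : ℝ)) (hlam1 : lam 0 = 1)
    (horth : ∀ k l, (v k) ⬝ᵥ Pi.mulVec (v l) = if k = l then 1 else 0)
    (hgap : ∀ k : Fin (n+2), 2 ≤ (k : ℕ) → lam k < lam 1) :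
    ∀ i j : Fin (n+2),
      Tendsto (fun t : ℝ => Real.exp (t * (1 - lam 1)) * B t i j) atTop
        (nhds ((d i / (2 * m)) * (d j / (2 * m)) * v 1 i * v 1 j)) ∧
      (v 1 i * v 1 j ≠ 0 → ∃ T : ℝ, ∀ t > T,
        Real.sign (B t i j) = Real.sign (v 1 i * v 1 j)) :=
  stmt_10_general n A d hd hdpos m hm M Pi hPi P hP B hB v lam hv hv1 hlam1 horth hgap
end

section
/- Let v ∈ ℝ^n be an eigenvector of the transition matrix M with eigenvalue λ (i.e., Mv = λv) satisfying 𝟙^T Π v = 0. Then for every t ∈ ℝ, the linearized autocovariance matrix satisfies B_lin(t) v = (1 − t(1−λ)) Π v. Moreover B_lin(t) 𝟙 = 0 for every t. -/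
open Matrix

/-- If `v` is an eigenvector of `M` with eigenvalue `λ` and
`𝟙ᵀ Π v = 0`, then `B_lin(t) v = (1 − t(1−λ)) Π v` for every `t`.
Moreover `B_lin(t) 𝟙 = 0`. -/
theorem stmt_13 (n : ℕ) (A : Matrix (Fin n) (Fin n) ℝ)
    (hAsymm : A.IsSymm) (hAnonneg : ∀ i j, 0 ≤ A i j)
    (d : Fin n → ℝ) (hd : ∀ i, d i = ∑ j, A i j) (hdpos : ∀ i, 0 < d i)
    (m : ℝ) (hm : m = (∑ i, ∑ j, A i j) / 2)
    (M : Matrix (Fin n) (Fin n) ℝ) (hM : M = (Matrix.diagonal d)⁻¹ * A)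
    (Pi : Matrix (Fin n) (Fin n) ℝ) (hPi : Pi = (2 * m)⁻¹ • Matrix.diagonal d)
    (Blin : ℝ → Matrix (Fin n) (Fin n) ℝ)
    (hBlin : ∀ t, Blin t =
      Pi * ((1 - t) • (1 : Matrix (Fin n) (Fin n) ℝ) + t • M) -
        Matrix.vecMulVec (fun i => d i / (2 * m)) (fun j => d j / (2 * m)))
    (v : Fin n → ℝ) (lam : ℝ) (hv : M.mulVec v = lam • v)
    (horth : ∑ i, (d i / (2 * m)) * v i = 0) :
    (∀ t : ℝ, (Blin t).mulVec v = (1 - t * (1 - lam)) • Pi.mulVec v) ∧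
    (∀ t : ℝ, (Blin t).mulVec (fun _ => (1 : ℝ)) = 0) := by

  have h2m : 2 * m = ∑ i, d i := by
    rw [hm]; simp only [hd]; ring
  have hsumv : (Matrix.vecMulVec (fun i => d i / (2 * m))
      (fun j => d j / (2 * m))).mulVec v = 0 := by
    funext i
    simp only [Matrix.mulVec, Matrix.vecMulVec_apply, dotProduct]
    simp_rw [mul_assoc]
    rw [← Finset.mul_sum, horth, mul_zero]
    rfl
  have hMone : M.mulVec (fun _ => (1 : ℝ)) = fun _ => (1 : ℝ) := by
    have hinv : (Matrix.diagonal d)⁻¹ = Matrix.diagonal (fun i => (d i)⁻¹) := by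
      apply Matrix.inv_eq_right_inv
      rw [Matrix.diagonal_mul_diagonal]
      convert Matrix.diagonal_one using 2
      funext i
      exact mul_inv_cancel₀ (hdpos i).ne'
    funext i
    rw [hM, hinv, ← Matrix.mulVec_mulVec, Matrix.mulVec_diagonal]
    have : A.mulVec (fun _ => (1 : ℝ)) i = d i := by
      simp [Matrix.mulVec, dotProduct, hd i]
    rw [this]
    exact inv_mul_cancel₀ (hdpos i).ne'
  constructor
  · intro t
    rw [hBlin, Matrix.sub_mulVec, hsumv, sub_zero, ← Matrix.mulVec_mulVec,
      Matrix.add_mulVec, Matrix.smul_mulVec, Matrix.smul_mulVec,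
      Matrix.one_mulVec, hv, smul_smul, ← add_smul, Matrix.mulVec_smul]
    congr 1
    ring
  · intro t
    rw [hBlin, Matrix.sub_mulVec, ← Matrix.mulVec_mulVec, Matrix.add_mulVec,
      Matrix.smul_mulVec, Matrix.smul_mulVec, Matrix.one_mulVec, hMone,
      ← add_smul]
    funext i
    have h2mpos : 0 < 2 * m := by
      rw [h2m]
      exact Finset.sum_pos (fun j _ => hdpos j) ⟨i, Finset.mem_univ i⟩
    have hPione : Pi.mulVec ((1 - t + t) • fun _ => (1 : ℝ)) i = d i / (2 * m) := by
      rw [hPi]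
      simp [Matrix.mulVec_smul, Matrix.smul_mulVec, Matrix.mulVec_diagonal]
      ring
    simp only [_root_.Pi.sub_apply, _root_.Pi.zero_apply, hPione]
    simp only [Matrix.mulVec, Matrix.vecMulVec_apply, dotProduct, mul_one]
    simp_rw [div_eq_mul_inv]
    rw [← Finset.mul_sum, ← Finset.sum_mul, ← h2m, mul_inv_cancel₀ h2mpos.ne', mul_one, sub_self]
end

section
/- At Markov time t = 1 the linearized autocovariance matrix equals the modularity matrix rescaled by 2m: for all i, j, B_lin(1)_{ij} = (A_{ij} − d_i d_j/(2m)) / (2m). Consequently, for any partition g, Σ_{s} Σ_{i,j ∈ g_s} B_lin(1)_{ij} equals the Newman–Girvan modularity of g. -/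
open Matrix

/- Since `M = D⁻¹A`, `Π((1 - t)I + tM) = ((1 - t)D + tA)/(2m)`; at `t = 1` the linearized
autocovariance is therefore `A/(2m) - πᵀπ`, entrywise the rescaled modularity matrix. -/

theorem diagonal_mul_lazy_walk {ι K : Type*} [Fintype ι] [DecidableEq ι] [Field K]
    {d : ι → K} (hd : ∀ i, d i ≠ 0) (A : Matrix ι ι K) (t : K) :
    diagonal d * ((1 - t) • (1 : Matrix ι ι K) + t • ((diagonal d)⁻¹ * A)) =
      (1 - t) • diagonal d + t • A := by
  have hunit : IsUnit (diagonal d).det := by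
    rw [det_diagonal]
    exact (Finset.prod_ne_zero_iff.2 fun i _ => hd i).isUnit
  rw [Matrix.mul_add, Matrix.mul_smul, Matrix.mul_smul, Matrix.mul_one,
    mul_nonsing_inv_cancel_left _ _ hunit]

theorem stmt_14_general (n : ℕ) (A : Matrix (Fin n) (Fin n) ℝ)
    (d : Fin n → ℝ) (hdpos : ∀ i, 0 < d i)
    (m : ℝ)
    (M : Matrix (Fin n) (Fin n) ℝ) (hM : M = (Matrix.diagonal d)⁻¹ * A)
    (Pi : Matrix (Fin n) (Fin n) ℝ) (hPi : Pi = (2 * m)⁻¹ • Matrix.diagonal d)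
    (Blin : ℝ → Matrix (Fin n) (Fin n) ℝ)
    (hBlin : ∀ t, Blin t =
      Pi * ((1 - t) • (1 : Matrix (Fin n) (Fin n) ℝ) + t • M) -
        Matrix.vecMulVec (fun i => d i / (2 * m)) (fun j => d j / (2 * m))) :
    (∀ i j, Blin 1 i j = (A i j - d i * d j / (2 * m)) / (2 * m)) ∧
    (∀ (c : ℕ) (g : Fin c → Finset (Fin n)),
      (∀ s s' : Fin c, s ≠ s' → Disjoint (g s) (g s')) →
      Finset.univ.biUnion g = (Finset.univ : Finset (Fin n)) →
      ∑ s : Fin c, ∑ i ∈ g s, ∑ j ∈ g s, Blin 1 i j =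
        ∑ s : Fin c, ∑ i ∈ g s, ∑ j ∈ g s,
          (A i j - d i * d j / (2 * m)) / (2 * m)) := by
  have hBlin_one : ∀ i j, Blin 1 i j = (A i j - d i * d j / (2 * m)) / (2 * m) := by
    intro i j
    rw [hBlin, hPi, hM, Matrix.smul_mul, diagonal_mul_lazy_walk (fun i => (hdpos i).ne')]
    simp only [sub_self, zero_smul, one_smul, zero_add, Matrix.sub_apply, Matrix.smul_apply, vecMulVec_apply,
      smul_eq_mul]
    ring
  exact ⟨hBlin_one, fun c g _ _ => by simp only [hBlin_one]⟩

/-- At `t = 1` the linearized autocovariance matrix equals the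
modularity matrix rescaled by `2m`: `B_lin(1)_{ij} = (A_{ij} − d_i d_j/(2m))/(2m)`.
Consequently, for any partition `g` of the vertices,
`∑_s ∑_{i,j∈g_s} B_lin(1)_{ij}` equals the Newman–Girvan modularity of `g`. -/
theorem stmt_14 (n : ℕ) (A : Matrix (Fin n) (Fin n) ℝ)
    (hAsymm : A.IsSymm) (hAnonneg : ∀ i j, 0 ≤ A i j)
    (d : Fin n → ℝ) (hd : ∀ i, d i = ∑ j, A i j) (hdpos : ∀ i, 0 < d i)
    (m : ℝ) (hm : m = (∑ i, ∑ j, A i j) / 2)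
    (M : Matrix (Fin n) (Fin n) ℝ) (hM : M = (Matrix.diagonal d)⁻¹ * A)
    (Pi : Matrix (Fin n) (Fin n) ℝ) (hPi : Pi = (2 * m)⁻¹ • Matrix.diagonal d)
    (Blin : ℝ → Matrix (Fin n) (Fin n) ℝ)
    (hBlin : ∀ t, Blin t =
      Pi * ((1 - t) • (1 : Matrix (Fin n) (Fin n) ℝ) + t • M) -
        Matrix.vecMulVec (fun i => d i / (2 * m)) (fun j => d j / (2 * m))) :
    (∀ i j, Blin 1 i j = (A i j - d i * d j / (2 * m)) / (2 * m)) ∧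
    (∀ (c : ℕ) (g : Fin c → Finset (Fin n)),
      (∀ s s' : Fin c, s ≠ s' → Disjoint (g s) (g s')) →
      Finset.univ.biUnion g = (Finset.univ : Finset (Fin n)) →
      ∑ s : Fin c, ∑ i ∈ g s, ∑ j ∈ g s, Blin 1 i j =
        ∑ s : Fin c, ∑ i ∈ g s, ∑ j ∈ g s,
          (A i j - d i * d j / (2 * m)) / (2 * m)) :=
  stmt_14_general n A d hdpos m M hM Pi hPi Blin hBlin
end
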